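/- arXiv:2103.02593 — 3 statements merged into one kernel-verified Lean document; each statement's English description precedes it below -/
import Mathlib

section
/- Let U be an invertible bounded linear operator on H and let Λ = {(W_j, Λ_j, v_j)}_{j∈J} be a K-g-fusion frame for H with bounds A, B, for some bounded linear operator K on H. Then Γ = {(U W_j, Λ_j P_{W_j} U*, v_j)}_{j∈J} is a U K U*-g-fusion frame for H with bounds A/‖U‖² and B‖U‖²; that is, for all f ∈ H, (A/‖U‖²)·‖(U K U*)* f‖² ≤ ∑_{j∈J} v_j² ‖Λ_j P_{W_j} U* P_{U W_j} f‖² ≤ B‖U‖²·‖f‖² (here each subspace U W_j is closed since U is invertible). -/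
noncomputable section

open ContinuousLinearMap

/-- Orthogonal projection onto a closed subspace, as an endomorphism of `H`. -/
noncomputable def gProj {H : Type*} [NormedAddCommGroup H] [InnerProductSpace ℂ H]
    (W : Submodule ℂ H) [CompleteSpace W] : H →L[ℂ] H :=
  W.subtypeL.comp (W.orthogonalProjection)

lemma gProj_key {H : Type*} [NormedAddCommGroup H] [InnerProductSpace ℂ H] [CompleteSpace H]
    (W : Submodule ℂ H) [CompleteSpace W] (U : H ≃L[ℂ] H)
    [CompleteSpace (W.map ((U : H →L[ℂ] H) : H →ₗ[ℂ] H))] (f : H) :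
    gProj W (adjoint (U : H →L[ℂ] H) (gProj (W.map ((U : H →L[ℂ] H) : H →ₗ[ℂ] H)) f))
      = gProj W (adjoint (U : H →L[ℂ] H) f) := by
  set WU := W.map ((U : H →L[ℂ] H) : H →ₗ[ℂ] H)
  have hmem : f - gProj WU f ∈ WUᗮ := Submodule.sub_starProjection_mem_orthogonal f
  have h0 : gProj W (adjoint (U : H →L[ℂ] H) (f - gProj WU f)) = 0 := by
    have hm : adjoint (U : H →L[ℂ] H) (f - gProj WU f) ∈ Wᗮ := by
      intro w hw
      rw [ContinuousLinearMap.adjoint_inner_right]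
      exact hmem _ (Submodule.mem_map_of_mem hw)
    have hz := Submodule.orthogonalProjectionOnto_eq_zero_iff.2 hm
    show W.subtypeL (W.orthogonalProjectionOnto (adjoint (U : H →L[ℂ] H) (f - gProj WU f))) = 0
    rw [hz]; simp
  have h1 : gProj W (adjoint (U : H →L[ℂ] H) f)
      = gProj W (adjoint (U : H →L[ℂ] H) (gProj WU f))
        + gProj W (adjoint (U : H →L[ℂ] H) (f - gProj WU f)) := by
    rw [← map_add, ← map_add, add_sub_cancel]
  rw [h1, h0, add_zero]

/-- If `Λ = {(W j, Λ j, v j)}` is a `K`-g-fusion frame with bounds `A, B` and `U`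
is an invertible bounded operator, then `Γ = {(U W j, Λ j P_{W j} U*, v j)}` is a
`U K U*`-g-fusion frame with bounds `A/‖U‖²` and `B‖U‖²`. -/
theorem kgFusion_map_invertible
    {H : Type*} [NormedAddCommGroup H] [InnerProductSpace ℂ H] [CompleteSpace H]
    {J : Type*} [Countable J]
    {G : J → Type*} [∀ j, NormedAddCommGroup (G j)] [∀ j, InnerProductSpace ℂ (G j)]
    [∀ j, CompleteSpace (G j)]
    (W : J → Submodule ℂ H) [∀ j, CompleteSpace (W j)]
    (v : J → ℝ) (hv : ∀ j, 0 < v j)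
    (Λ : ∀ j, H →L[ℂ] G j)
    (K : H →L[ℂ] H) (U : H ≃L[ℂ] H)
    [∀ j, CompleteSpace ((W j).map ((U : H →L[ℂ] H) : H →ₗ[ℂ] H))]
    (A B : ℝ) (hA : 0 < A) (hAB : A ≤ B)
    (hSummable : ∀ f : H, Summable fun j => (v j) ^ 2 * ‖Λ j (gProj (W j) f)‖ ^ 2)
    (hlower : ∀ f : H,
      A * ‖adjoint K f‖ ^ 2 ≤ ∑' j, (v j) ^ 2 * ‖Λ j (gProj (W j) f)‖ ^ 2)
    (hupper : ∀ f : H,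
      (∑' j, (v j) ^ 2 * ‖Λ j (gProj (W j) f)‖ ^ 2) ≤ B * ‖f‖ ^ 2) :
    ∀ f : H,
      Summable (fun j => (v j) ^ 2 *
        ‖Λ j (gProj (W j) (adjoint (U : H →L[ℂ] H)
          (gProj ((W j).map ((U : H →L[ℂ] H) : H →ₗ[ℂ] H)) f)))‖ ^ 2) ∧
      (A / ‖(U : H →L[ℂ] H)‖ ^ 2) *
        ‖adjoint ((U : H →L[ℂ] H) ∘L K ∘L adjoint (U : H →L[ℂ] H)) f‖ ^ 2 ≤
        ∑' j, (v j) ^ 2 *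
          ‖Λ j (gProj (W j) (adjoint (U : H →L[ℂ] H)
            (gProj ((W j).map ((U : H →L[ℂ] H) : H →ₗ[ℂ] H)) f)))‖ ^ 2 ∧
      (∑' j, (v j) ^ 2 *
          ‖Λ j (gProj (W j) (adjoint (U : H →L[ℂ] H)
            (gProj ((W j).map ((U : H →L[ℂ] H) : H →ₗ[ℂ] H)) f)))‖ ^ 2) ≤
        B * ‖(U : H →L[ℂ] H)‖ ^ 2 * ‖f‖ ^ 2 := by
  intro f
  have heq : (fun j => (v j) ^ 2 *
      ‖Λ j (gProj (W j) (adjoint (U : H →L[ℂ] H)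
        (gProj ((W j).map ((U : H →L[ℂ] H) : H →ₗ[ℂ] H)) f)))‖ ^ 2)
      = fun j => (v j) ^ 2 * ‖Λ j (gProj (W j) (adjoint (U : H →L[ℂ] H) f))‖ ^ 2 :=
    funext fun j => by rw [gProj_key (W j) U f]
  have hUf : ‖adjoint (U : H →L[ℂ] H) f‖ ≤ ‖(U : H →L[ℂ] H)‖ * ‖f‖ := by
    calc ‖adjoint (U : H →L[ℂ] H) f‖ ≤ ‖adjoint (U : H →L[ℂ] H)‖ * ‖f‖ := le_opNorm _ _
      _ = ‖(U : H →L[ℂ] H)‖ * ‖f‖ := by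
          rw [LinearIsometryEquiv.norm_map adjoint (U : H →L[ℂ] H)]
  refine ⟨?_, ?_, ?_⟩
  · rw [heq]; exact hSummable _
  · rw [heq]
    refine le_trans ?_ (hlower (adjoint (U : H →L[ℂ] H) f))
    have hadj : adjoint ((U : H →L[ℂ] H) ∘L K ∘L adjoint (U : H →L[ℂ] H)) f
        = (U : H →L[ℂ] H) (adjoint K (adjoint (U : H →L[ℂ] H) f)) := by
      simp [adjoint_comp, adjoint_adjoint]
    rw [hadj]
    set x := adjoint K (adjoint (U : H →L[ℂ] H) f)
    rcases eq_or_ne ‖(U : H →L[ℂ] H)‖ 0 with h0 | h0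
    · have : ‖(U : H →L[ℂ] H) x‖ = 0 := by
        have := le_opNorm (U : H →L[ℂ] H) x
        rw [h0, zero_mul] at this
        exact le_antisymm this (norm_nonneg _)
      rw [this]
      simp only [ne_eq, OfNat.ofNat_ne_zero, not_false_eq_true, zero_pow, mul_zero]
      positivity
    · have h1 : ‖(U : H →L[ℂ] H) x‖ ^ 2 ≤ ‖(U : H →L[ℂ] H)‖ ^ 2 * ‖x‖ ^ 2 := by
        rw [← mul_pow]
        exact pow_le_pow_left₀ (norm_nonneg _) (le_opNorm _ _) 2
      calc A / ‖(U : H →L[ℂ] H)‖ ^ 2 * ‖(U : H →L[ℂ] H) x‖ ^ 2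
          ≤ A / ‖(U : H →L[ℂ] H)‖ ^ 2 * (‖(U : H →L[ℂ] H)‖ ^ 2 * ‖x‖ ^ 2) := by
            apply mul_le_mul_of_nonneg_left h1
            positivity
        _ = A * ‖x‖ ^ 2 := by
            field_simp
  · rw [heq]
    refine le_trans (hupper (adjoint (U : H →L[ℂ] H) f)) ?_
    have h2 : ‖adjoint (U : H →L[ℂ] H) f‖ ^ 2 ≤ ‖(U : H →L[ℂ] H)‖ ^ 2 * ‖f‖ ^ 2 := by
      rw [← mul_pow]
      exact pow_le_pow_left₀ (norm_nonneg _) hUf 2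
    calc B * ‖adjoint (U : H →L[ℂ] H) f‖ ^ 2
        ≤ B * (‖(U : H →L[ℂ] H)‖ ^ 2 * ‖f‖ ^ 2) := by
          apply mul_le_mul_of_nonneg_left h2 (le_of_lt (lt_of_lt_of_le hA hAB))
      _ = B * ‖(U : H →L[ℂ] H)‖ ^ 2 * ‖f‖ ^ 2 := by ring
end
end

section
/- Let K be an invertible bounded linear operator on H and let Λ = {(W_j, Λ_j, v_j)}_{j∈J} be a g-fusion frame for H with bounds A, B and g-fusion frame operator S_Λ. Then {(K S_Λ⁻¹ W_j, Λ_j P_{W_j} S_Λ⁻¹ K*, v_j)}_{j∈J} is a K-g-fusion frame for H with bounds A/B² and (B/A²)‖K‖²; that is, for all f ∈ H, (A/B²)·‖K* f‖² ≤ ∑_{j∈J} v_j² ‖Λ_j P_{W_j} S_Λ⁻¹ K* P_{K S_Λ⁻¹ W_j} f‖² ≤ (B/A²)‖K‖²·‖f‖² (where each subspace K S_Λ⁻¹ W_j is closed since K S_Λ⁻¹ is invertible). -/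
noncomputable section

open ContinuousLinearMap

local notation "⟪" x ", " y "⟫" => @inner ℂ _ _ x y

section Aux

variable {H : Type*} [NormedAddCommGroup H] [InnerProductSpace ℂ H] [CompleteSpace H]

lemma gProj_inner_left (W : Submodule ℂ H) [CompleteSpace W] (x y : H) :
    ⟪x, gProj W y⟫ = ⟪gProj W x, y⟫ := by
  conv_lhs => rw [show gProj W = adjoint (gProj W) from
    ((isSelfAdjoint_starProjection W).adjoint_eq).symm]
  rw [adjoint_inner_right]

lemma gProj_eq_zero (W : Submodule ℂ H) [CompleteSpace W] {x : H} (hx : x ∈ Wᗮ) :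
    gProj W x = 0 := by
  simp [gProj, Submodule.orthogonalProjectionOnto_apply_of_mem_orthogonal hx]

lemma gProj_adjoint_gProj_map (U : H →L[ℂ] H) (W : Submodule ℂ H) [CompleteSpace W]
    [CompleteSpace (W.map (U : H →ₗ[ℂ] H))] (f : H) :
    gProj W (adjoint U (gProj ((W.map (U : H →ₗ[ℂ] H))) f)) = gProj W (adjoint U f) := by
  set V := W.map (U : H →ₗ[ℂ] H)
  have hV : f - gProj V f ∈ Vᗮ := Submodule.sub_starProjection_mem_orthogonal (K := V) f
  have hmem : adjoint U (f - gProj V f) ∈ Wᗮ := by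
    rw [Submodule.mem_orthogonal]
    intro w hw
    rw [adjoint_inner_right]
    exact hV (U w) (Submodule.mem_map_of_mem hw)
  have h0 : gProj W (adjoint U f - adjoint U (gProj V f)) = 0 := by
    rw [← map_sub]; exact gProj_eq_zero W hmem
  rw [map_sub, sub_eq_zero] at h0
  exact h0.symm

lemma norm_apply_le_of_quadratic (T : H →L[ℂ] H)
    (hsym : ∀ x y : H, ⟪T x, y⟫ = ⟪x, T y⟫) (B : ℝ)
    (h0 : ∀ z : H, 0 ≤ (⟪z, T z⟫).re) (hB : ∀ z : H, (⟪z, T z⟫).re ≤ B * ‖z‖ ^ 2)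
    (x : H) : ‖T x‖ ≤ B * ‖x‖ := by
  have h4 : ∀ a b : H, (⟪a, T b⟫).re = (⟪b, T a⟫).re := by
    intro a b
    rw [← inner_conj_symm, Complex.conj_re, hsym b a]
  rcases eq_or_ne x 0 with rfl | hx0
  · simp
  have hxpos : (0:ℝ) < ‖x‖ := norm_pos_iff.mpr hx0
  have hBnn : 0 ≤ B := by
    have h1 := h0 x
    have h2 := hB x
    nlinarith [pow_pos hxpos 2]
  rcases eq_or_ne (T x) 0 with hTx | hTx
  · rw [hTx, norm_zero]; positivity
  have hTxpos : (0:ℝ) < ‖T x‖ := norm_pos_iff.mpr hTx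
  set c : ℝ := ‖x‖ / ‖T x‖ with hc
  have hcpos : 0 < c := div_pos hxpos hTxpos
  set y : H := c • T x with hy
  have hyn : ‖y‖ = ‖x‖ := by
    rw [hy, norm_smul, Real.norm_eq_abs, abs_of_pos hcpos, hc]
    field_simp
  have hre : (⟪y, T x⟫).re = ‖x‖ * ‖T x‖ := by
    rw [hy, show c • T x = (c : ℂ) • T x from (RCLike.real_smul_eq_coe_smul (K := ℂ) c (T x)),
      inner_smul_left, Complex.conj_ofReal]
    have hinn : (⟪T x, T x⟫).re = ‖T x‖ ^ 2 := inner_self_eq_norm_sq (𝕜 := ℂ) (T x)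
    rw [Complex.re_ofReal_mul, hinn, hc]
    field_simp
  have hpol : 4 * (⟪y, T x⟫).re = (⟪y+x, T (y+x)⟫).re - (⟪y-x, T (y-x)⟫).re := by
    simp only [map_add, map_sub, inner_add_left, inner_add_right, inner_sub_left,
      inner_sub_right, Complex.add_re, Complex.sub_re]
    rw [h4 x y]
    ring
  have hnorm1 : ‖y + x‖ ≤ 2 * ‖x‖ := by
    calc ‖y + x‖ ≤ ‖y‖ + ‖x‖ := norm_add_le _ _
    _ = 2 * ‖x‖ := by rw [hyn]; ring
  have key : 4 * (‖x‖ * ‖T x‖) ≤ 4 * (B * ‖x‖ ^ 2) := by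
    rw [← hre, hpol]
    have h1 : (⟪y+x, T (y+x)⟫).re ≤ B * ‖y+x‖ ^ 2 := hB _
    have h2 : 0 ≤ (⟪y-x, T (y-x)⟫).re := h0 _
    have h3 : B * ‖y+x‖ ^ 2 ≤ B * (2*‖x‖) ^ 2 := by
      apply mul_le_mul_of_nonneg_left _ hBnn
      exact pow_le_pow_left₀ (norm_nonneg _) hnorm1 2
    nlinarith
  nlinarith [hxpos]

end Aux

theorem kgFusion_of_inv_frameOp
    {H : Type*} [NormedAddCommGroup H] [InnerProductSpace ℂ H] [CompleteSpace H]
    {J : Type*} [Countable J]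
    {G : J → Type*} [∀ j, NormedAddCommGroup (G j)] [∀ j, InnerProductSpace ℂ (G j)]
    [∀ j, CompleteSpace (G j)]
    (W : J → Submodule ℂ H) [∀ j, CompleteSpace (W j)]
    (v : J → ℝ) (hv : ∀ j, 0 < v j)
    (Λ : ∀ j, H →L[ℂ] G j)
    (K : H ≃L[ℂ] H) (S : H ≃L[ℂ] H)
    [∀ j, CompleteSpace ((W j).map
      (((K : H →L[ℂ] H) ∘L (S.symm : H →L[ℂ] H) : H →L[ℂ] H) : H →ₗ[ℂ] H))]
    (A B : ℝ) (hA : 0 < A) (hAB : A ≤ B)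
    (hSummable : ∀ f : H, Summable fun j => (v j) ^ 2 * ‖Λ j (gProj (W j) f)‖ ^ 2)
    (hlower : ∀ f : H,
      A * ‖f‖ ^ 2 ≤ ∑' j, (v j) ^ 2 * ‖Λ j (gProj (W j) f)‖ ^ 2)
    (hupper : ∀ f : H,
      (∑' j, (v j) ^ 2 * ‖Λ j (gProj (W j) f)‖ ^ 2) ≤ B * ‖f‖ ^ 2)
    (hS : ∀ f : H, HasSum
      (fun j => (v j) ^ 2 • gProj (W j) (adjoint (Λ j) (Λ j (gProj (W j) f)))) (S f)) :
    ∀ f : H,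
      Summable (fun j => (v j) ^ 2 *
        ‖Λ j (gProj (W j) (S.symm (adjoint (K : H →L[ℂ] H)
          (gProj ((W j).map
            (((K : H →L[ℂ] H) ∘L (S.symm : H →L[ℂ] H) : H →L[ℂ] H) : H →ₗ[ℂ] H)) f))))‖ ^ 2) ∧
      (A / B ^ 2) * ‖adjoint (K : H →L[ℂ] H) f‖ ^ 2 ≤
        ∑' j, (v j) ^ 2 *
          ‖Λ j (gProj (W j) (S.symm (adjoint (K : H →L[ℂ] H)
            (gProj ((W j).map
              (((K : H →L[ℂ] H) ∘L (S.symm : H →L[ℂ] H) : H →L[ℂ] H) : H →ₗ[ℂ] H)) f))))‖ ^ 2 ∧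
      (∑' j, (v j) ^ 2 *
          ‖Λ j (gProj (W j) (S.symm (adjoint (K : H →L[ℂ] H)
            (gProj ((W j).map
              (((K : H →L[ℂ] H) ∘L (S.symm : H →L[ℂ] H) : H →L[ℂ] H) : H →ₗ[ℂ] H)) f))))‖ ^ 2) ≤
        (B / A ^ 2) * ‖(K : H →L[ℂ] H)‖ ^ 2 * ‖f‖ ^ 2 := by
  -- inner product representation of S
  have hinner : ∀ f g : H, ⟪g, S f⟫ = ∑' j,
      (((v j) ^ 2 : ℝ) : ℂ) * ⟪Λ j (gProj (W j) g), Λ j (gProj (W j) f)⟫ := by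
    intro f g
    have h := (hS f).mapL (innerSL ℂ g)
    have heq : (fun j => innerSL ℂ g
        ((v j) ^ 2 • gProj (W j) (adjoint (Λ j) (Λ j (gProj (W j) f))))) =
        fun j => (((v j) ^ 2 : ℝ) : ℂ) * ⟪Λ j (gProj (W j) g), Λ j (gProj (W j) f)⟫ := by
      funext j
      show ⟪g, (v j) ^ 2 • gProj (W j) (adjoint (Λ j) (Λ j (gProj (W j) f)))⟫ = _
      rw [RCLike.real_smul_eq_coe_smul (K := ℂ), inner_smul_right, gProj_inner_left,
        adjoint_inner_right]
      norm_cast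
    rw [heq] at h
    exact h.tsum_eq.symm
  -- symmetry of S
  have hsym : ∀ x y : H, ⟪(S : H →L[ℂ] H) x, y⟫ = ⟪x, (S : H →L[ℂ] H) y⟫ := by
    intro x y
    have : ⟪(S : H →L[ℂ] H) x, y⟫ = (starRingEnd ℂ) ⟪y, S x⟫ := (inner_conj_symm _ _).symm
    rw [this, hinner x y, starRingEnd_apply, tsum_star]
    rw [show ((S : H →L[ℂ] H) y) = S y from rfl, hinner y x]
    congr 1
    funext j
    rw [← starRingEnd_apply, map_mul, Complex.conj_ofReal, inner_conj_symm]
  -- quadratic form of S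
  have hquad : ∀ f : H, (⟪f, (S : H →L[ℂ] H) f⟫).re
      = ∑' j, (v j) ^ 2 * ‖Λ j (gProj (W j) f)‖ ^ 2 := by
    intro f
    show (⟪f, S f⟫).re = _
    have h1 := hinner f f
    have h2 : (fun j => (((v j) ^ 2 : ℝ) : ℂ) * ⟪Λ j (gProj (W j) f), Λ j (gProj (W j) f)⟫) =
        fun j => (((v j) ^ 2 * ‖Λ j (gProj (W j) f)‖ ^ 2 : ℝ) : ℂ) := by
      funext j
      rw [inner_self_eq_norm_sq_to_K]
      norm_cast
      exact (Complex.ofReal_mul _ _).symm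
    rw [h2] at h1
    have h3 := ((hSummable f).hasSum.mapL Complex.ofRealCLM).tsum_eq
    simp only [Complex.ofRealCLM_apply] at h3
    rw [h1, h3, Complex.ofReal_re]
  have hBpos : 0 < B := lt_of_lt_of_le hA hAB
  -- norm bounds for S
  have hSle : ∀ f : H, ‖(S : H →L[ℂ] H) f‖ ≤ B * ‖f‖ := by
    apply norm_apply_le_of_quadratic (S : H →L[ℂ] H) hsym B
    · intro z
      have h1 := hlower z
      rw [← hquad z] at h1
      have h0' : (0:ℝ) ≤ A * ‖z‖ ^ 2 := by positivity
      linarith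
    · intro z
      rw [hquad z]
      exact hupper z
  have hSge : ∀ f : H, A * ‖f‖ ≤ ‖(S : H →L[ℂ] H) f‖ := by
    intro f
    rcases eq_or_ne f 0 with rfl | hf0
    · simp
    have hfpos : (0:ℝ) < ‖f‖ := norm_pos_iff.mpr hf0
    have h1 : A * ‖f‖ ^ 2 ≤ (⟪f, (S : H →L[ℂ] H) f⟫).re := by rw [hquad]; exact hlower f
    have h2 : (⟪f, (S : H →L[ℂ] H) f⟫).re ≤ ‖⟪f, (S : H →L[ℂ] H) f⟫‖ := Complex.re_le_norm _
    have h3 : ‖⟪f, (S : H →L[ℂ] H) f⟫‖ ≤ ‖f‖ * ‖(S : H →L[ℂ] H) f‖ := norm_inner_le_norm _ _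
    nlinarith
  -- adjoint of S.symm
  have hSadj : adjoint (S : H →L[ℂ] H) = (S : H →L[ℂ] H) :=
    (ContinuousLinearMap.isSelfAdjoint_iff_isSymmetric.mpr (fun x y => hsym x y)).adjoint_eq
  have hadj : adjoint (S.symm : H →L[ℂ] H) = (S.symm : H →L[ℂ] H) := by
    have hcomp : (S : H →L[ℂ] H) ∘L (S.symm : H →L[ℂ] H) = ContinuousLinearMap.id ℂ H := by
      ext z; simp
    have h2 := congrArg ContinuousLinearMap.adjoint hcomp
    rw [adjoint_comp, adjoint_id, hSadj] at h2
    ext z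
    have h3 := DFunLike.congr_fun h2 (S.symm z)
    simpa using h3
  set K' : H →L[ℂ] H := (K : H →L[ℂ] H) with hK'
  set Ss : H →L[ℂ] H := (S.symm : H →L[ℂ] H) with hSs
  have hUadj : ∀ x : H, adjoint (K' ∘L Ss) x = S.symm (adjoint K' x) := by
    intro x
    rw [adjoint_comp, hadj]
    rfl
  intro f
  set g : H := S.symm (adjoint K' f) with hg
  have hterm : ∀ j, Λ j (gProj (W j) (S.symm (adjoint K'
      (gProj ((W j).map ((K' ∘L Ss : H →L[ℂ] H) : H →ₗ[ℂ] H)) f)))) =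
      Λ j (gProj (W j) g) := by
    intro j
    rw [← hUadj, gProj_adjoint_gProj_map, hUadj]
  have hSg : (S : H →L[ℂ] H) g = adjoint K' f := by
    show S (S.symm (adjoint K' f)) = adjoint K' f
    exact S.apply_symm_apply _
  have hKfle : ‖adjoint K' f‖ ≤ B * ‖g‖ := by rw [← hSg]; exact hSle g
  have hKfge : A * ‖g‖ ≤ ‖adjoint K' f‖ := by rw [← hSg]; exact hSge g
  have hKnorm : ‖adjoint K' f‖ ≤ ‖K'‖ * ‖f‖ := by
    calc ‖adjoint K' f‖ ≤ ‖adjoint K'‖ * ‖f‖ := le_opNorm _ f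
    _ = ‖K'‖ * ‖f‖ := by rw [LinearIsometryEquiv.norm_map ContinuousLinearMap.adjoint K']
  refine ⟨?_, ?_, ?_⟩
  · simp only [hK', hSs] at hterm; simp only [hterm]
    exact hSummable g
  · have h2' : ‖adjoint K' f‖ ^ 2 ≤ (B * ‖g‖) ^ 2 :=
      pow_le_pow_left₀ (norm_nonneg _) hKfle 2
    simp only [hK', hSs] at hterm; simp only [hterm]
    calc A / B ^ 2 * ‖adjoint K' f‖ ^ 2 ≤ A / B ^ 2 * (B * ‖g‖) ^ 2 := by
          exact mul_le_mul_of_nonneg_left h2' (by positivity)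
    _ = A * ‖g‖ ^ 2 := by field_simp
    _ ≤ _ := hlower g
  · have h3 : (A * ‖g‖) ^ 2 ≤ (‖K'‖ * ‖f‖) ^ 2 :=
      pow_le_pow_left₀ (by positivity) (le_trans hKfge hKnorm) 2
    simp only [hK', hSs] at hterm; simp only [hterm]
    calc (∑' j, (v j) ^ 2 * ‖Λ j (gProj (W j) g)‖ ^ 2) ≤ B * ‖g‖ ^ 2 := hupper g
    _ = B / A ^ 2 * (A * ‖g‖) ^ 2 := by field_simp
    _ ≤ B / A ^ 2 * (‖K'‖ * ‖f‖) ^ 2 := mul_le_mul_of_nonneg_left h3 (by positivity)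
    _ = B / A ^ 2 * ‖K'‖ ^ 2 * ‖f‖ ^ 2 := by ring
end
end

section
/- Let K be a bounded linear operator on H, Λ = {(W_j, Λ_j, v_j)}_{j∈J} a K-g-fusion frame for H with bounds A', B' and g-fusion frame operator S_Λ, and U an invertible bounded linear operator on H. If there exists C > 0 such that ‖(U K)* f‖² ≤ C·‖(U S_Λ U*)^{1/2} f‖² for all f ∈ H (where (U S_Λ U*)^{1/2} is the positive square root of U S_Λ U*), then Γ = {(U W_j, Λ_j P_{W_j} U*, v_j)}_{j∈J} is a UK-g-fusion frame for H with bounds 1/C and B'‖U‖²; that is, for all f ∈ H, (1/C)·‖(U K)* f‖² ≤ ∑_{j∈J} v_j² ‖Λ_j P_{W_j} U* P_{U W_j} f‖² ≤ B'‖U‖²·‖f‖². -/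
noncomputable section

open ContinuousLinearMap

open RCLike in
lemma hasSum_re_inner {H : Type*} [NormedAddCommGroup H] [InnerProductSpace ℂ H] [CompleteSpace H]
    {J : Type*}
    {G : J → Type*} [∀ j, NormedAddCommGroup (G j)] [∀ j, InnerProductSpace ℂ (G j)]
    [∀ j, CompleteSpace (G j)]
    (W : J → Submodule ℂ H) [∀ j, CompleteSpace (W j)]
    (v : J → ℝ) (Λ : ∀ j, H →L[ℂ] G j)
    (S : H →L[ℂ] H)
    (hS : ∀ f : H, HasSum
      (fun j => (v j) ^ 2 • gProj (W j) (adjoint (Λ j) (Λ j (gProj (W j) f)))) (S f))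
    (g : H) :
    HasSum (fun j => (v j) ^ 2 * ‖Λ j (gProj (W j) g)‖ ^ 2)
      (Complex.re (inner ℂ g (S g) : ℂ)) := by
  have h1 : HasSum (fun j => (inner ℂ g ((v j) ^ 2 •
      gProj (W j) (adjoint (Λ j) (Λ j (gProj (W j) g)))) : ℂ)) (inner ℂ g (S g)) :=
    (innerSL ℂ g).hasSum (hS g)
  have hterm : ∀ j, (inner ℂ g ((v j) ^ 2 •
      gProj (W j) (adjoint (Λ j) (Λ j (gProj (W j) g)))) : ℂ)
      = (((v j) ^ 2 * ‖Λ j (gProj (W j) g)‖ ^ 2 : ℝ) : ℂ) := by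
    intro j
    have hsa : ContinuousLinearMap.adjoint (gProj (W j)) = gProj (W j) :=
      (isSelfAdjoint_starProjection (W j)).adjoint_eq
    have e1 : ∀ z : H, (inner ℂ g (gProj (W j) z) : ℂ) = inner ℂ (gProj (W j) g) z := by
      intro z
      conv_rhs => rw [← hsa]
      exact (adjoint_inner_left (gProj (W j)) z g).symm
    have this : (inner ℂ g (gProj (W j) (adjoint (Λ j) (Λ j (gProj (W j) g)))) : ℂ)
        = inner ℂ (Λ j (gProj (W j) g)) (Λ j (gProj (W j) g)) :=
      (e1 _).trans (adjoint_inner_right (Λ j) _ _)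
    rw [RCLike.real_smul_eq_coe_smul (K := ℂ), inner_smul_right, this,
      inner_self_eq_norm_sq_to_K]
    push_cast
    norm_cast
  have h2 : HasSum (fun j => (((v j) ^ 2 * ‖Λ j (gProj (W j) g)‖ ^ 2 : ℝ) : ℂ))
      (inner ℂ g (S g)) := by
    simpa only [hterm] using h1
  have h3 := Complex.reCLM.hasSum h2
  simpa only [Complex.reCLM_apply, Complex.ofReal_re] using h3


/-- If `‖(UK)* f‖² ≤ C ‖(U S_Λ U*)^{1/2} f‖²` for all `f`, then
`Γ = {(U W j, Λ j P_{W j} U*, v j)}` is a `UK`-g-fusion frame with bounds `1/C` and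
`B'‖U‖²`. -/
theorem UK_gFusion_of_quotient_bounded
    {H : Type*} [NormedAddCommGroup H] [InnerProductSpace ℂ H] [CompleteSpace H]
    {J : Type*} [Countable J]
    {G : J → Type*} [∀ j, NormedAddCommGroup (G j)] [∀ j, InnerProductSpace ℂ (G j)]
    [∀ j, CompleteSpace (G j)]
    (W : J → Submodule ℂ H) [∀ j, CompleteSpace (W j)]
    (v : J → ℝ) (hv : ∀ j, 0 < v j)
    (Λ : ∀ j, H →L[ℂ] G j)
    (K : H →L[ℂ] H) (U : H ≃L[ℂ] H)
    [∀ j, CompleteSpace ((W j).map ((U : H →L[ℂ] H) : H →ₗ[ℂ] H))]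
    (A' B' : ℝ) (hA' : 0 < A') (hA'B' : A' ≤ B')
    (hΛsum : ∀ f : H, Summable fun j => (v j) ^ 2 * ‖Λ j (gProj (W j) f)‖ ^ 2)
    (hΛlow : ∀ f : H,
      A' * ‖adjoint K f‖ ^ 2 ≤ ∑' j, (v j) ^ 2 * ‖Λ j (gProj (W j) f)‖ ^ 2)
    (hΛup : ∀ f : H,
      (∑' j, (v j) ^ 2 * ‖Λ j (gProj (W j) f)‖ ^ 2) ≤ B' * ‖f‖ ^ 2)
    (S : H →L[ℂ] H)
    (hS : ∀ f : H, HasSum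
      (fun j => (v j) ^ 2 • gProj (W j) (adjoint (Λ j) (Λ j (gProj (W j) f)))) (S f))
    (Q : H →L[ℂ] H) (hQpos : Q.IsPositive)
    (hQsq : Q ∘L Q = (U : H →L[ℂ] H) ∘L S ∘L adjoint (U : H →L[ℂ] H))
    (C : ℝ) (hC : 0 < C)
    (hCbound : ∀ f : H,
      ‖adjoint ((U : H →L[ℂ] H) ∘L K) f‖ ^ 2 ≤ C * ‖Q f‖ ^ 2) :
    ∀ f : H,
      Summable (fun j => (v j) ^ 2 *
        ‖Λ j (gProj (W j) (adjoint (U : H →L[ℂ] H)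
          (gProj ((W j).map ((U : H →L[ℂ] H) : H →ₗ[ℂ] H)) f)))‖ ^ 2) ∧
      (1 / C) * ‖adjoint ((U : H →L[ℂ] H) ∘L K) f‖ ^ 2 ≤
        ∑' j, (v j) ^ 2 *
          ‖Λ j (gProj (W j) (adjoint (U : H →L[ℂ] H)
            (gProj ((W j).map ((U : H →L[ℂ] H) : H →ₗ[ℂ] H)) f)))‖ ^ 2 ∧
      (∑' j, (v j) ^ 2 *
          ‖Λ j (gProj (W j) (adjoint (U : H →L[ℂ] H)
            (gProj ((W j).map ((U : H →L[ℂ] H) : H →ₗ[ℂ] H)) f)))‖ ^ 2) ≤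
        B' * ‖(U : H →L[ℂ] H)‖ ^ 2 * ‖f‖ ^ 2 := by
  intro f
  set g : H := adjoint (U : H →L[ℂ] H) f with hg
  have hfun : (fun j => (v j) ^ 2 *
      ‖Λ j (gProj (W j) (adjoint (U : H →L[ℂ] H)
        (gProj ((W j).map ((U : H →L[ℂ] H) : H →ₗ[ℂ] H)) f)))‖ ^ 2)
      = fun j => (v j) ^ 2 * ‖Λ j (gProj (W j) g)‖ ^ 2 := by
    funext j
    rw [gProj_key (W j) U f]
  -- The sum equals ‖Q f‖²
  have hsum := hasSum_re_inner W v Λ S hS g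
  have hQf : Complex.re (inner ℂ g (S g) : ℂ) = ‖Q f‖ ^ 2 := by
    have e1 : (inner ℂ g (S g) : ℂ) = inner ℂ f ((U : H →L[ℂ] H) (S g)) :=
      adjoint_inner_left (U : H →L[ℂ] H) (S g) f
    have e2 : (U : H →L[ℂ] H) (S g) = Q (Q f) := by
      have := congrArg (fun T : H →L[ℂ] H => T f) hQsq
      simpa [hg] using this.symm
    have e3 : (inner ℂ f (Q (Q f)) : ℂ) = inner ℂ (Q f) (Q f) := by
      rw [← adjoint_inner_left Q (Q f) f, hQpos.isSelfAdjoint.adjoint_eq]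
    rw [e1, e2, e3, inner_self_eq_norm_sq_to_K]
    norm_cast
  have htsum : (∑' j, (v j) ^ 2 *
      ‖Λ j (gProj (W j) (adjoint (U : H →L[ℂ] H)
        (gProj ((W j).map ((U : H →L[ℂ] H) : H →ₗ[ℂ] H)) f)))‖ ^ 2) = ‖Q f‖ ^ 2 := by
    rw [hfun, hsum.tsum_eq, hQf]
  refine ⟨?_, ?_, ?_⟩
  · rw [hfun]; exact hΛsum g
  · rw [htsum]
    rw [div_mul_eq_mul_div, one_mul, div_le_iff₀ hC]
    calc ‖adjoint ((U : H →L[ℂ] H) ∘L K) f‖ ^ 2 ≤ C * ‖Q f‖ ^ 2 := hCbound f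
      _ = ‖Q f‖ ^ 2 * C := by ring
  · rw [hfun]
    calc (∑' j, (v j) ^ 2 * ‖Λ j (gProj (W j) g)‖ ^ 2) ≤ B' * ‖g‖ ^ 2 := hΛup g
      _ ≤ B' * ‖(U : H →L[ℂ] H)‖ ^ 2 * ‖f‖ ^ 2 := by
        have hB' : 0 ≤ B' := le_of_lt (lt_of_lt_of_le hA' hA'B')
        have hgn : ‖g‖ ≤ ‖(U : H →L[ℂ] H)‖ * ‖f‖ := by
          calc ‖g‖ ≤ ‖adjoint (U : H →L[ℂ] H)‖ * ‖f‖ := le_opNorm _ f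
            _ = ‖(U : H →L[ℂ] H)‖ * ‖f‖ := by
              rw [LinearIsometryEquiv.norm_map ContinuousLinearMap.adjoint]
        have h2 : ‖g‖ ^ 2 ≤ (‖(U : H →L[ℂ] H)‖ * ‖f‖) ^ 2 :=
          pow_le_pow_left₀ (norm_nonneg _) hgn 2
        calc B' * ‖g‖ ^ 2 ≤ B' * ((‖(U : H →L[ℂ] H)‖ * ‖f‖) ^ 2) :=
              mul_le_mul_of_nonneg_left h2 hB'
          _ = B' * ‖(U : H →L[ℂ] H)‖ ^ 2 * ‖f‖ ^ 2 := by ring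
end
end
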